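/- arXiv:2308.06511 — 7 statements merged into one kernel-verified Lean document; each statement's English description precedes it below -/
import Mathlib

section
/- Under the same hypotheses and definitions as before (fixed integer n ≥ 0, p_k, ϑ_k, Θ_k := d_kᵀ ϑ_k), assume additionally that the limit τ := lim_{k→∞} k^{δ+n+2}(Θ_k − Θ_{k−1}) is nonzero. Then for every ε > 0 there exists an integer k₂ such that |Θ − Θ_k| ≤ (1+ε) · k · |Θ_k − Θ_{k−1}| / (Re(δ) + n + 1) for all integers k ≥ k₂. -/
open Filter Topology Asymptotics Matrix Complex

/-!
For `k > n + Re δ` the recursion `Γ(z + 1) = z Γ(z)` turns the first `n + 1` terms of the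
expansion of `d_k` into a multiple of `p_k`, which `ϑ_k` annihilates, while `b₁ᵀϑ_k = 1`; since
`p_k → b₂`, the vectors `ϑ_k` stay bounded and `Θ_k → Θ`.
With `s = Re δ + n + 2 > 1`, the hypothesis on `τ` gives `|Θ_j − Θ_{j−1}| ≈ |τ| j^{-s}`, so
`|Θ − Θ_k| ≤ Σ_{j>k} |Θ_j − Θ_{j−1}| ≤ (1 + η)|τ| k^{1−s}/(s − 1)` by comparison with
`∫_k^∞ x^{-s} dx`, and `(1 − η)|τ| k^{-s} ≤ |Θ_k − Θ_{k−1}|` turns this into the estimate.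
-/

theorem sum_range_rpow_neg_le {s : ℝ} (hs : 1 < s) {x₀ : ℝ} (hx₀ : 0 < x₀) (a : ℕ) :
    ∑ i ∈ Finset.range a, (x₀ + ↑(i + 1)) ^ (-s) ≤ x₀ ^ (1 - s) / (s - 1) := by
  have hanti : AntitoneOn (fun x : ℝ => x ^ (-s)) (Set.Icc x₀ (x₀ + a)) :=
    fun x hx y _ hxy => Real.rpow_le_rpow_of_nonpos (hx₀.trans_le hx.1) hxy (by linarith)
  have hzero : (0 : ℝ) ∉ Set.uIcc x₀ (x₀ + a) := by
    rw [Set.uIcc_of_le (by simp)]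
    exact fun h => hx₀.not_ge h.1
  calc _ ≤ ∫ x in x₀..x₀ + a, x ^ (-s) := hanti.sum_le_integral
    _ = (x₀ ^ (1 - s) - (x₀ + a) ^ (1 - s)) / (s - 1) := by
      rw [integral_rpow (.inr ⟨by linarith, hzero⟩), neg_add_eq_sub, ← neg_sub s 1, div_neg,
        ← neg_div, neg_sub]
    _ ≤ x₀ ^ (1 - s) / (s - 1) := by
      have : 0 ≤ (x₀ + a) ^ (1 - s) := Real.rpow_nonneg (by positivity) _
      gcongr
      linarith

theorem norm_sub_le_of_norm_sub_pred_le {E : Type*} [SeminormedAddCommGroup E] {x : ℕ → E}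
    {L : E} (hx : Tendsto x atTop (𝓝 L)) {s C : ℝ} (hs : 1 < s) {k : ℕ} (hk : 0 < k)
    (hC : ∀ j, k < j → ‖x j - x (j - 1)‖ ≤ C * (j : ℝ) ^ (-s)) :
    ‖L - x k‖ ≤ C * (k : ℝ) ^ (1 - s) / (s - 1) := by
  have hC₀ : 0 ≤ C := by
    have := (norm_nonneg _).trans (hC (k + 1) (by omega))
    exact nonneg_of_mul_nonneg_left this (by positivity)
  have hpartial : ∀ a, ‖x (k + a) - x k‖ ≤ C * (k : ℝ) ^ (1 - s) / (s - 1) := by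
    intro a
    have htelescope := Finset.sum_range_sub (fun i => x (k + i)) a
    rw [add_zero] at htelescope
    rw [← htelescope, mul_div_assoc]
    calc _ ≤ ∑ i ∈ Finset.range a, C * ((k : ℝ) + ↑(i + 1)) ^ (-s) := by
          refine norm_sum_le_of_le _ fun i _ => ?_
          simpa only [← add_assoc, Nat.add_sub_cancel, Nat.cast_add] using
            hC (k + (i + 1)) (by omega)
      _ ≤ C * ((k : ℝ) ^ (1 - s) / (s - 1)) := by
          rw [← Finset.mul_sum]
          exact mul_le_mul_of_nonneg_left (sum_range_rpow_neg_le hs (by positivity) a) hC₀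
  have hlim : Tendsto (fun a => ‖x (k + a) - x k‖) atTop (𝓝 ‖L - x k‖) :=
    ((hx.comp (tendsto_atTop_atTop.2 fun b => ⟨b, fun a ha => by omega⟩)).sub_const (x k)).norm
  exact le_of_tendsto' hlim hpartial

theorem eventually_norm_sub_le_of_tendsto_rpow_mul_norm_sub {E : Type*}
    [SeminormedAddCommGroup E] {x : ℕ → E} {L : E} (hx : Tendsto x atTop (𝓝 L)) {s T : ℝ}
    (hs : 1 < s) (hT : 0 < T)
    (hA : Tendsto (fun k : ℕ => (k : ℝ) ^ s * ‖x k - x (k - 1)‖) atTop (𝓝 T))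
    {ε : ℝ} (hε : 0 < ε) :
    ∀ᶠ k : ℕ in atTop, ‖L - x k‖ ≤ (1 + ε) * k * ‖x k - x (k - 1)‖ / (s - 1) := by
  set η := ε / (ε + 2) with hη
  have hη₀ : 0 < η := by positivity
  have hηε : 1 + η = (1 + ε) * (1 - η) := by rw [hη]; field_simp; ring
  obtain ⟨N, hN⟩ := eventually_atTop.1 <| hA.eventually <| Ioo_mem_nhds
    (show (1 - η) * T < T by nlinarith) (show T < (1 + η) * T by nlinarith)
  refine eventually_atTop.2 ⟨max N 1, fun k hk => ?_⟩
  have hk₀ : (0 : ℝ) < k := by exact_mod_cast (le_max_right N 1).trans hk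
  have hupper : ∀ j, k < j → ‖x j - x (j - 1)‖ ≤ (1 + η) * T * (j : ℝ) ^ (-s) := by
    intro j hj
    have hj₀ : (0 : ℝ) < j := hk₀.trans (by exact_mod_cast hj)
    rw [Real.rpow_neg hj₀.le, ← div_eq_mul_inv, le_div_iff₀ (by positivity), mul_comm]
    exact (hN j (by omega)).2.le
  calc ‖L - x k‖ ≤ (1 + η) * T * (k : ℝ) ^ (1 - s) / (s - 1) :=
        norm_sub_le_of_norm_sub_pred_le hx hs (by omega) hupper
    _ = (1 + ε) * ((1 - η) * T) * (k : ℝ) ^ (1 - s) / (s - 1) := by rw [hηε]; ring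
    _ ≤ (1 + ε) * ((k : ℝ) ^ s * ‖x k - x (k - 1)‖) * (k : ℝ) ^ (1 - s) / (s - 1) := by
        have := (hN k (le_of_max_le_left hk)).1.le
        gcongr
    _ = (1 + ε) * ((k : ℝ) ^ s * (k : ℝ) ^ (1 - s)) * ‖x k - x (k - 1)‖ / (s - 1) := by ring
    _ = (1 + ε) * k * ‖x k - x (k - 1)‖ / (s - 1) := by
        rw [← Real.rpow_add hk₀, add_sub_cancel, Real.rpow_one]

theorem Filter.Tendsto.dotProduct {α ι R : Type*} [Fintype ι] [TopologicalSpace R] [Mul R]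
    [AddCommMonoid R] [ContinuousAdd R] [ContinuousMul R] {l : Filter α} {u v : α → ι → R}
    {a b : ι → R} (hu : Tendsto u l (𝓝 a)) (hv : Tendsto v l (𝓝 b)) :
    Tendsto (fun x => u x ⬝ᵥ v x) l (𝓝 (a ⬝ᵥ b)) :=
  ((continuous_fst.dotProduct continuous_snd).tendsto (a, b)).comp (hu.prodMk_nhds hv)

section PerpDual

variable {K : Type*} [Field K]

/-- The paper's `ϑ_k` is `perpDual b₁ p_k`. -/
def perpDual (b v : Fin 2 → K) : Fin 2 → K :=
  ((!![0, 1; -1, 0] *ᵥ v) ⬝ᵥ b)⁻¹ • (!![0, 1; -1, 0] *ᵥ v)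

theorem rot_mulVec_dotProduct (v b : Fin 2 → K) :
    (!![0, 1; -1, 0] *ᵥ v) ⬝ᵥ b = v 1 * b 0 - v 0 * b 1 := by
  simp only [mulVec, dotProduct, Fin.sum_univ_two, of_apply, cons_val', cons_val_zero,
    cons_val_one, cons_val_fin_one]
  ring

theorem dotProduct_perpDual_self (b v : Fin 2 → K) : v ⬝ᵥ perpDual b v = 0 := by
  rw [perpDual, dotProduct_smul, dotProduct_comm v, rot_mulVec_dotProduct v v, mul_comm, sub_self,
    smul_zero]

theorem dotProduct_perpDual_of_ne_zero {b v : Fin 2 → K} (h : (!![0, 1; -1, 0] *ᵥ v) ⬝ᵥ b ≠ 0) :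
    b ⬝ᵥ perpDual b v = 1 := by
  rw [perpDual, dotProduct_smul, smul_eq_mul, dotProduct_comm b, inv_mul_cancel₀ h]

theorem rot_mulVec_dotProduct_ne_zero {b₁ b₂ : Fin 2 → K} (hb : LinearIndependent K ![b₁, b₂]) :
    (!![0, 1; -1, 0] *ᵥ b₂) ⬝ᵥ b₁ ≠ 0 := by
  have hdet : IsUnit (Matrix.of ![b₁, b₂]).det :=
    (Matrix.isUnit_iff_isUnit_det _).mp (Matrix.linearIndependent_rows_iff_isUnit.mp hb)
  rw [Matrix.det_fin_two, isUnit_iff_ne_zero] at hdet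
  rw [rot_mulVec_dotProduct]
  simpa [mul_comm] using hdet

theorem continuousAt_perpDual [TopologicalSpace K] [IsTopologicalDivisionRing K] {b v : Fin 2 → K}
    (h : (!![0, 1; -1, 0] *ᵥ v) ⬝ᵥ b ≠ 0) : ContinuousAt (perpDual b) v := by
  have hrot : Continuous fun v : Fin 2 → K => !![0, 1; -1, 0] *ᵥ v :=
    continuous_const.matrix_mulVec continuous_id
  exact ((hrot.dotProduct continuous_const).continuousAt.inv₀ h).smul hrot.continuousAt

end PerpDual

theorem neg_one_pow_mul_Gamma_mul_Gamma_eq {δ z : ℂ} {ℓ : ℕ}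
    (h₀ : ∀ m < ℓ, (m : ℂ) + δ ≠ 0) (hz : ∀ m < ℓ, (m : ℂ) + δ ≠ z) :
    (-1) ^ ℓ * Gamma (ℓ + δ) * Gamma (z - ℓ + 1 - δ) =
      Gamma δ * Gamma (z + 1 - δ) * ∏ m ∈ Finset.range ℓ, (m + δ) / (m + δ - z) := by
  induction ℓ with
  | zero => simp
  | succ ℓ ih =>
    have hℓ₀ := h₀ ℓ ℓ.lt_add_one
    have hℓz : (ℓ : ℂ) + δ - z ≠ 0 := sub_ne_zero.2 (hz ℓ ℓ.lt_add_one)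
    have hΓ₁ : Gamma (↑(ℓ + 1) + δ) = (ℓ + δ) * Gamma (ℓ + δ) := by
      rw [← Gamma_add_one _ hℓ₀]; push_cast; ring_nf
    have hΓ₂ : Gamma (z - ℓ + 1 - δ) = (z - ℓ - δ) * Gamma (z - ℓ - δ) := by
      rw [← Gamma_add_one _ fun h => hℓz (by linear_combination -h)]; ring_nf
    rw [Finset.prod_range_succ, ← mul_assoc, ← ih (fun m hm => h₀ m (by omega))
      (fun m hm => hz m (by omega)), hΓ₁, hΓ₂, pow_succ,
      show z - ↑(ℓ + 1) + 1 - δ = z - ℓ - δ by push_cast; ring]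
    field_simp
    ring

noncomputable section Expansion

variable {V : Type*} [AddCommGroup V] [Module ℂ V]

/-- The sum in the expansion of `d_k`, without its factor `ω / Γ(k + 1)`. -/
def expansionSum (δ : ℂ) (dt : ℕ → V) (m : ℕ) (z : ℂ) : V :=
  ∑ ℓ ∈ Finset.range (m + 1), ((-1 : ℂ) ^ ℓ * Gamma (ℓ + δ) * Gamma (z - ℓ + 1 - δ)) • dt ℓ

/-- The paper's `p_k` is `truncatedDirection δ d̃ n k`. -/
def truncatedDirection (δ : ℂ) (dt : ℕ → V) (n : ℕ) (z : ℂ) : V :=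
  dt 0 + ∑ ℓ ∈ Finset.Icc 1 n, (∏ m ∈ Finset.range ℓ, ((m + δ) / (m + δ - z))) • dt ℓ

theorem expansionSum_eq_smul_truncatedDirection {δ z : ℂ} (dt : ℕ → V) {n : ℕ}
    (h₀ : ∀ m ≤ n, (m : ℂ) + δ ≠ 0) (hz : ∀ m ≤ n, (m : ℂ) + δ ≠ z) :
    expansionSum δ dt n z = (Gamma δ * Gamma (z + 1 - δ)) • truncatedDirection δ dt n z := by
  rw [expansionSum, truncatedDirection, Finset.range_eq_Ico,
    Finset.sum_eq_sum_Ico_succ_bot n.succ_pos, zero_add, Nat.succ_eq_add_one,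
    Finset.Ico_add_one_right_eq_Icc, smul_add,
    Finset.smul_sum]
  congr 1
  · simp
  · refine Finset.sum_congr rfl fun ℓ hℓ => ?_
    rw [smul_smul, neg_one_pow_mul_Gamma_mul_Gamma_eq (fun m hm => h₀ m ?_) fun m hm => hz m ?_]
    all_goals grind

theorem expansionSum_zero_zero (dt : ℕ → V) (z : ℂ) : expansionSum 0 dt 0 z = 0 := by
  simp [expansionSum]

theorem tendsto_div_sub_natCast (c : ℂ) :
    Tendsto (fun k : ℕ => c / (c - k)) atTop (𝓝 0) := by
  simpa [div_eq_mul_inv] using tendsto_const_nhds.mul <| tendsto_inv₀_cobounded.comp <|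
    (tendsto_const_sub_cobounded c).comp (tendsto_natCast_atTop_cobounded (α := ℂ))

theorem tendsto_truncatedDirection [TopologicalSpace V] [IsTopologicalAddGroup V]
    [ContinuousSMul ℂ V] (δ : ℂ) (dt : ℕ → V) (n : ℕ) :
    Tendsto (fun k : ℕ => truncatedDirection δ dt n k) atTop (𝓝 (dt 0)) := by
  have hprod : ∀ ℓ ∈ Finset.Icc 1 n, Tendsto
      (fun k : ℕ => ∏ m ∈ Finset.range ℓ, ((m + δ) / (m + δ - k))) atTop (𝓝 0) := by
    intro ℓ hℓ
    have hlim := tendsto_finsetProd (Finset.range ℓ) fun m _ =>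
      tendsto_div_sub_natCast ((m : ℂ) + δ)
    rwa [Finset.prod_eq_zero (f := fun _ => (0 : ℂ))
      (Finset.mem_range.2 (Finset.mem_Icc.1 hℓ).1) rfl] at hlim
  have hsum := tendsto_finsetSum (Finset.Icc 1 n) fun ℓ hℓ => (hprod ℓ hℓ).smul_const (dt ℓ)
  simp only [zero_smul, Finset.sum_const_zero] at hsum
  simpa only [truncatedDirection, add_zero] using (tendsto_const_nhds (x := dt 0)).add hsum

end Expansion

theorem exists_eventually_expansionSum_dotProduct_perpDual_eq_zero {δ : ℂ} (hδ : -1 < δ.re)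
    (b : Fin 2 → ℂ) (dt : ℕ → Fin 2 → ℂ) (n : ℕ) :
    ∃ m, ∀ᶠ k : ℕ in atTop,
      expansionSum δ dt m k ⬝ᵥ perpDual b (truncatedDirection δ dt n k) = 0 := by
  rcases eq_or_ne δ 0 with rfl | hδ₀
  · -- Mathlib's junk value `Gamma 0 = 0` kills the `ℓ = 0` term.
    exact ⟨0, .of_forall fun k => by rw [expansionSum_zero_zero, zero_dotProduct]⟩
  refine ⟨n, ?_⟩
  obtain ⟨K, hK⟩ := exists_nat_gt (n + δ.re)
  filter_upwards [eventually_ge_atTop K] with k hk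
  rw [expansionSum_eq_smul_truncatedDirection dt ?_ ?_, smul_dotProduct,
    dotProduct_perpDual_self, smul_zero]
  · intro m _ h
    have hre : (m : ℝ) + δ.re = 0 := by simpa using congrArg re h
    rcases Nat.eq_zero_or_pos m with rfl | hm
    · exact hδ₀ (by simpa using h)
    · have : (1 : ℝ) ≤ m := by exact_mod_cast hm
      linarith
  · intro m hm h
    have hre : (m : ℝ) + δ.re = k := by simpa using congrArg re h
    have : (m : ℝ) ≤ n := by exact_mod_cast hm
    have : (K : ℝ) ≤ k := by exact_mod_cast hk
    linarith

theorem tendsto_dotProduct_perpDual_truncatedDirection {δ : ℂ} (hδ : -1 < δ.re)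
    {b₁ b₂ : Fin 2 → ℂ} (hb : LinearIndependent ℂ ![b₁, b₂]) {dt : ℕ → Fin 2 → ℂ}
    (hdt0 : dt 0 = b₂) {Θ ω : ℂ} {d : ℕ → Fin 2 → ℂ}
    (hd : ∀ m : ℕ, (fun k : ℕ => d k - (Θ • b₁ + (ω / Gamma (k + 1)) • expansionSum δ dt m k))
      =O[atTop] fun k : ℕ => (k : ℝ) ^ (-δ.re - m - 1)) (n : ℕ) :
    Tendsto (fun k : ℕ => d k ⬝ᵥ perpDual b₁ (truncatedDirection δ dt n k)) atTop (𝓝 Θ) := by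
  set ϑ := fun k : ℕ => perpDual b₁ (truncatedDirection δ dt n k)
  have hp := hdt0 ▸ tendsto_truncatedDirection δ dt n
  have hc := rot_mulVec_dotProduct_ne_zero hb
  have hϑ : Tendsto ϑ atTop (𝓝 (perpDual b₁ b₂)) := (continuousAt_perpDual hc).tendsto.comp hp
  have hb₁ϑ : ∀ᶠ k in atTop, b₁ ⬝ᵥ ϑ k = 1 := by
    have hrot : Continuous fun v : Fin 2 → ℂ => (!![0, 1; -1, 0] *ᵥ v) ⬝ᵥ b₁ :=
      (continuous_const.matrix_mulVec continuous_id).dotProduct continuous_const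
    filter_upwards [(hrot.tendsto b₂).comp hp |>.eventually_ne hc] with k hk
    exact dotProduct_perpDual_of_ne_zero hk
  obtain ⟨m, hm⟩ := exists_eventually_expansionSum_dotProduct_perpDual_eq_zero hδ b₁ dt n
  set r := fun k : ℕ => d k - (Θ • b₁ + (ω / Gamma (k + 1)) • expansionSum δ dt m k)
  have hr : Tendsto r atTop (𝓝 0) := (hd m).trans_tendsto <| by
    rw [show -δ.re - m - 1 = -(δ.re + m + 1) by ring]
    exact (tendsto_rpow_neg_atTop (by linarith [m.cast_nonneg (α := ℝ)])).comp
      tendsto_natCast_atTop_atTop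
  have hrϑ : Tendsto (fun k => r k ⬝ᵥ ϑ k) atTop (𝓝 0) := by
    simpa only [zero_dotProduct] using hr.dotProduct hϑ
  show Tendsto (fun k => d k ⬝ᵥ ϑ k) atTop (𝓝 Θ)
  have hlim := (tendsto_const_nhds (x := Θ)).add hrϑ
  rw [add_zero] at hlim
  refine hlim.congr' ?_
  filter_upwards [hb₁ϑ, hm] with k hk₁ hk₂
  have hdk : d k = Θ • b₁ + (ω / Gamma (k + 1)) • expansionSum δ dt m k + r k := by
    simp only [r, add_sub_cancel]
  rw [hdk, add_dotProduct, add_dotProduct, smul_dotProduct, smul_dotProduct, hk₁, hk₂,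
    smul_eq_mul, mul_one, smul_zero, add_zero]

/-- The a posteriori error estimate of Theorem 4 of the paper: if additionally the limit
`τ = lim_k k^{δ+n+2}(Θ_k − Θ_{k−1})` is nonzero, then for every `ε > 0` eventually
`|Θ − Θ_k| ≤ (1+ε)·k·|Θ_k − Θ_{k−1}|/(Re δ + n + 1)`. -/
theorem connection_coefficient_a_posteriori
    (δ : ℂ) (hδ : -1 < δ.re)
    (b₁ b₂ : Fin 2 → ℂ) (hb : LinearIndependent ℂ ![b₁, b₂])
    (dt : ℕ → Fin 2 → ℂ) (hdt0 : dt 0 = b₂)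
    (Θ ω : ℂ) (d : ℕ → Fin 2 → ℂ)
    (hd : ∀ m : ℕ,
      (fun k : ℕ => d k - (Θ • b₁ + (ω / Complex.Gamma ((k : ℂ) + 1)) •
          ∑ ℓ ∈ Finset.range (m + 1),
            ((-1 : ℂ) ^ ℓ * Complex.Gamma ((ℓ : ℂ) + δ)
              * Complex.Gamma ((k : ℂ) - ℓ + 1 - δ)) • dt ℓ))
        =O[atTop] fun k : ℕ => (k : ℝ) ^ (-δ.re - m - 1))
    (n : ℕ)
    (p : ℕ → Fin 2 → ℂ)
    (hp : ∀ k : ℕ, p k = b₂ + ∑ ℓ ∈ Finset.Icc 1 n,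
        (∏ m ∈ Finset.range ℓ, (((m : ℂ) + δ) / ((m : ℂ) + δ - k))) • dt ℓ)
    (J : Matrix (Fin 2) (Fin 2) ℂ) (hJ : J = !![0, 1; -1, 0])
    (ϑ : ℕ → Fin 2 → ℂ)
    (hϑ : ∀ k : ℕ, ϑ k = ((J.mulVec (p k)) ⬝ᵥ b₁)⁻¹ • J.mulVec (p k))
    (Θseq : ℕ → ℂ) (hΘseq : ∀ k : ℕ, Θseq k = (d k) ⬝ᵥ (ϑ k))
    (τ : ℂ) (hτ : τ ≠ 0)
    (hlim : Tendsto (fun k : ℕ => (k : ℂ) ^ (δ + (n : ℂ) + 2) * (Θseq k - Θseq (k - 1)))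
      atTop (𝓝 τ)) :
    ∀ ε : ℝ, 0 < ε → ∃ k₂ : ℕ, ∀ k ≥ k₂,
      ‖Θ - Θseq k‖ ≤
        (1 + ε) * (k : ℝ) * ‖Θseq k - Θseq (k - 1)‖ / (δ.re + n + 1) := by
  subst hJ
  have hϑ' : ϑ = fun k : ℕ => perpDual b₁ (truncatedDirection δ dt n k) := by
    funext k
    rw [hϑ, hp, truncatedDirection, hdt0, perpDual]
  have hconv : Tendsto Θseq atTop (𝓝 Θ) := by
    rw [funext hΘseq, hϑ']
    exact tendsto_dotProduct_perpDual_truncatedDirection hδ hb hdt0 hd n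
  have hA : Tendsto (fun k : ℕ => (k : ℝ) ^ (δ.re + n + 2) * ‖Θseq k - Θseq (k - 1)‖)
      atTop (𝓝 ‖τ‖) := by
    refine hlim.norm.congr' ?_
    filter_upwards [eventually_gt_atTop 0] with k hk
    rw [norm_mul, norm_natCast_cpow_of_pos hk]
    simp only [add_re, natCast_re, re_ofNat]
  intro ε hε
  obtain ⟨k₂, hk₂⟩ := eventually_atTop.1 <| eventually_norm_sub_le_of_tendsto_rpow_mul_norm_sub
    hconv (by linarith) (norm_pos_iff.2 hτ) hA hε
  exact ⟨k₂, fun k hk => (hk₂ k hk).trans_eq (by ring)⟩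
end

section
/- Let A₀, A₁ ∈ M₂(ℂ) be such that A₀ − k·I is invertible for every integer k ≥ 1, let (G_k)_{k≥0} be a sequence in M₂(ℂ) such that G(z) := Σ_{k≥0} z^k G_k converges on the unit disk 𝔇₀ = {z ∈ ℂ : |z| < 1}, and let η(z) = Σ_{k≥0} z^k d_k (with d_k ∈ ℂ²) be holomorphic on 𝔇₀ and satisfy η′(z) = (A₀/z + A₁/(z−1) + G(z)) η(z) for all z ∈ 𝔇₀ with z ≠ 0. Define u₀ := d₀ and recursively u_k := (A₀ − k)^{−1} ((A₁ + 1)·d_{k−1} − Σ_{ℓ=0}^{k−1} G_{k−1−ℓ} u_ℓ) and d′_k := d′_{k−1} + u_k for k ≥ 1, starting with d′₀ := d₀. Then d_k = d′_k for all k ≥ 0; equivalently, the differences u_k = d_k − d_{k−1} satisfy (A₀ − k)(d_k − d_{k−1}) = (A₁+1) d_{k−1} − Σ_{ℓ=0}^{k−1} G_{k−1−ℓ}(d_ℓ − d_{ℓ−1}) for every k ≥ 1, where d_{−1} := 0. -/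
/-!
The differences `u k` are the Taylor coefficients of `ξ z = (1 - z) • η z`, and the equation for
`η` turns into the Euler-type equation `z ξ' - A₀ ξ = z (G ξ - (A₁ + 1) η)` on the punctured disk.
The coefficient of `z ^ k` is `(k - A₀) u k` on the left and, by the Cauchy product,
`Σ_{ℓ < k} G_{k-1-ℓ} u ℓ - (A₁ + 1) d (k - 1)` on the right. Both sides are power series on the
whole disk, so by the identity theorem the puncture does not matter and the coefficients agree.
-/

open Matrix Topology Finset FormalMultilinearSeries

section PowerSeries

variable {E : Type*} [NormedAddCommGroup E] [NormedSpace ℂ E]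

noncomputable def FormalMultilinearSeries.ofCoeff (c : ℕ → E) : FormalMultilinearSeries ℂ ℂ E :=
  fun n => ContinuousMultilinearMap.mkPiRing ℂ (Fin n) (c n)

@[simp]
theorem FormalMultilinearSeries.coeff_ofCoeff (c : ℕ → E) (n : ℕ) : (ofCoeff c).coeff n = c n := by
  simp [coeff, ofCoeff]

theorem hasFPowerSeriesOnBall_ofCoeff {c : ℕ → E} {f : ℂ → E}
    (h : ∀ z : ℂ, ‖z‖ < 1 → HasSum (fun k => z ^ k • c k) (f z)) :
    HasFPowerSeriesOnBall f (ofCoeff c) 0 1 := by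
  refine ⟨?_, zero_lt_one, fun {y} hy => ?_⟩
  · refine ENNReal.le_of_forall_nnreal_lt fun r hr => ?_
    have hr1 : ‖(r : ℂ)‖ < 1 := by simpa using (by exact_mod_cast hr : (r : ℝ) < 1)
    refine (ofCoeff c).le_radius_of_tendsto (l := 0) ?_
    simpa [norm_smul, mul_comm] using (h r hr1).summable.tendsto_atTop_zero.norm
  · have hy1 : ‖y‖ < 1 := by simpa [← ofReal_norm, ENNReal.ofReal_lt_one] using hy
    simpa using h y hy1

theorem eq_of_hasSum_pow_smul_of_eq_of_ne_zero [CompleteSpace E] {a b : ℕ → E} {f g : ℂ → E}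
    (ha : ∀ z : ℂ, ‖z‖ < 1 → HasSum (fun k => z ^ k • a k) (f z))
    (hb : ∀ z : ℂ, ‖z‖ < 1 → HasSum (fun k => z ^ k • b k) (g z))
    (hfg : ∀ z : ℂ, ‖z‖ < 1 → z ≠ 0 → f z = g z) : a = b := by
  have hfa := hasFPowerSeriesOnBall_ofCoeff ha
  have hgb := hasFPowerSeriesOnBall_ofCoeff hb
  have hfg' : ∃ᶠ z in 𝓝[≠] (0 : ℂ), f z = g z := by
    refine (eventually_nhdsWithin_iff.mpr ?_).frequently
    filter_upwards [Metric.ball_mem_nhds (0 : ℂ) one_pos] with z hz hz0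
    exact hfg z (by simpa using hz) hz0
  have hp := hfa.hasFPowerSeriesAt.eq_formalMultilinearSeries_of_eventually hgb.hasFPowerSeriesAt
    ((hfa.analyticAt.frequently_eq_iff_eventually_eq hgb.analyticAt).mp hfg')
  funext k
  simpa using congrArg (coeff · k) hp

theorem hasSum_pow_smul_deriv [CompleteSpace E] {c : ℕ → E} {f : ℂ → E}
    (h : ∀ z : ℂ, ‖z‖ < 1 → HasSum (fun k => z ^ k • c k) (f z)) {z : ℂ} (hz : ‖z‖ < 1) :
    HasSum (fun k => z ^ k • ((k + 1) • c (k + 1))) (deriv f z) := by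
  have hz' : z ∈ Metric.eball (0 : ℂ) 1 := by
    simpa [Metric.mem_eball, edist_zero_right, ← ofReal_norm, ENNReal.ofReal_lt_one] using hz
  have hs := ((hasFPowerSeriesOnBall_ofCoeff h).fderiv.hasSum hz').mapL
    (ContinuousLinearMap.apply ℂ E (1 : ℂ))
  simpa [apply_eq_pow_smul_coeff, fderiv_apply_one_eq_deriv] using hs

theorem HasSum.pow_smul_shift {c : ℕ → E} {z : ℂ} {S : E}
    (h : HasSum (fun k => z ^ k • c k) S) :
    HasSum (fun k => z ^ k • (if k = 0 then 0 else c (k - 1))) (z • S) := by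
  refine (hasSum_nat_add_iff' 1).mp ?_
  simpa [pow_succ', mul_smul] using h.const_smul z

theorem hasSum_pow_smul_nsmul_deriv [CompleteSpace E] {c : ℕ → E} {f : ℂ → E}
    (h : ∀ z : ℂ, ‖z‖ < 1 → HasSum (fun k => z ^ k • c k) (f z)) {z : ℂ} (hz : ‖z‖ < 1) :
    HasSum (fun k => z ^ k • (k • c k)) (z • deriv f z) := by
  convert (hasSum_pow_smul_deriv h hz).pow_smul_shift using 2 with k
  cases k <;> simp

theorem HasSum.pow_smul_sub_shift {c : ℕ → E} {z : ℂ} {S : E}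
    (h : HasSum (fun k => z ^ k • c k) S) :
    HasSum (fun k => z ^ k • (if k = 0 then c 0 else c k - c (k - 1))) ((1 - z) • S) := by
  convert h.sub h.pow_smul_shift using 2 with k
  · cases k <;> simp [smul_sub]
  · rw [sub_smul, one_smul]

end PowerSeries

theorem HasSum.mulVec_left {R ι m n : Type*} [CommSemiring R] [TopologicalSpace R]
    [IsTopologicalSemiring R] [Fintype n] {v : ι → n → R} {w : n → R} (A : Matrix m n R)
    (h : HasSum v w) : HasSum (fun k => A *ᵥ v k) (A *ᵥ w) :=
  h.map (mulVecLin A) (continuous_const.matrix_mulVec continuous_id)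

section MulVec

variable {𝕜 : Type*} [RCLike 𝕜] {m n : Type*} [Fintype n]

theorem HasSum.sum_range_mulVec {A : ℕ → Matrix m n 𝕜} {v : ℕ → n → 𝕜} {S : Matrix m n 𝕜}
    {w : n → 𝕜} (hA : HasSum A S) (hv : HasSum v w) :
    HasSum (fun k => ∑ ℓ ∈ range (k + 1), A (k - ℓ) *ᵥ v ℓ) (S *ᵥ w) := by
  refine Pi.hasSum.mpr fun i => ?_
  have hentry (j : n) :
      HasSum (fun k => ∑ ℓ ∈ range (k + 1), v ℓ j * A (k - ℓ) i j) (w j * S i j) := by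
    have hAij : HasSum (fun k => A k i j) (S i j) := Pi.hasSum.mp (Pi.hasSum.mp hA i) j
    have hvj : HasSum (fun k => v k j) (w j) := Pi.hasSum.mp hv j
    -- unconditional summability in the finite-dimensional space `𝕜` is absolute
    have := hasSum_sum_range_mul_of_summable_norm hvj.summable.norm hAij.summable.norm
    rwa [hvj.tsum_eq, hAij.tsum_eq] at this
  convert hasSum_sum (s := univ) fun j _ => hentry j using 1
  · ext k
    simp only [Finset.sum_apply, mulVec, dotProduct]
    rw [Finset.sum_comm]
    simp only [mul_comm]
  · simp [mulVec, dotProduct, mul_comm]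

theorem HasSum.pow_smul_sum_range_mulVec {A : ℕ → Matrix m n 𝕜} {v : ℕ → n → 𝕜} {z : 𝕜}
    {S : Matrix m n 𝕜} {w : n → 𝕜} (hA : HasSum (fun k => z ^ k • A k) S)
    (hv : HasSum (fun k => z ^ k • v k) w) :
    HasSum (fun k => z ^ k • ∑ ℓ ∈ range (k + 1), A (k - ℓ) *ᵥ v ℓ) (S *ᵥ w) := by
  convert hA.sum_range_mulVec hv using 2 with k
  rw [Finset.smul_sum]
  refine Finset.sum_congr rfl fun ℓ hℓ => ?_
  rw [smul_mulVec, mulVec_smul, smul_smul, pow_sub_mul_pow z (Finset.mem_range_succ_iff.mp hℓ)]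

end MulVec

theorem smul_deriv_one_sub_smul_sub_mulVec {n : Type*} [Fintype n] [DecidableEq n]
    {A₀ A₁ G : Matrix n n ℂ} {η : ℂ → n → ℂ} {z : ℂ} (hz₀ : z ≠ 0) (hz₁ : z ≠ 1)
    (h : HasDerivAt η ((z⁻¹ • A₀ + (z - 1)⁻¹ • A₁ + G) *ᵥ η z) z) :
    z • deriv (fun w => (1 - w) • η w) z - A₀ *ᵥ ((1 - z) • η z) =
      z • (G *ᵥ ((1 - z) • η z) - (A₁ + 1) *ᵥ η z) := by
  have hz₁' : z - 1 ≠ 0 := sub_ne_zero.mpr hz₁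
  rw [(((hasDerivAt_id' z).const_sub 1).fun_smul h).deriv]
  simp only [add_mulVec, smul_mulVec, one_mulVec, mulVec_smul]
  match_scalars <;> field_simp <;> ring

theorem coefficient_recurrence_general
    (A₀ A₁ : Matrix (Fin 2) (Fin 2) ℂ)
    (Gc : ℕ → Matrix (Fin 2) (Fin 2) ℂ)
    (G : ℂ → Matrix (Fin 2) (Fin 2) ℂ)
    (hG : ∀ z : ℂ, ‖z‖ < 1 → HasSum (fun k : ℕ => z ^ k • Gc k) (G z))
    (η : ℂ → Fin 2 → ℂ) (d : ℕ → Fin 2 → ℂ)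
    (hη : ∀ z : ℂ, ‖z‖ < 1 → HasSum (fun k : ℕ => z ^ k • d k) (η z))
    (hode : ∀ z : ℂ, ‖z‖ < 1 → z ≠ 0 →
      HasDerivAt η ((z⁻¹ • A₀ + (z - 1)⁻¹ • A₁ + G z).mulVec (η z)) z)
    (u : ℕ → Fin 2 → ℂ)
    (hu : ∀ ℓ : ℕ, u ℓ = if ℓ = 0 then d 0 else d ℓ - d (ℓ - 1)) :
    ∀ k : ℕ, 1 ≤ k →
      (A₀ - (k : ℂ) • (1 : Matrix (Fin 2) (Fin 2) ℂ)).mulVec (u k) =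
        (A₁ + (1 : Matrix (Fin 2) (Fin 2) ℂ)).mulVec (d (k - 1))
          - ∑ ℓ ∈ Finset.range k, (Gc (k - 1 - ℓ)).mulVec (u ℓ) := by
  have hξ : ∀ z : ℂ, ‖z‖ < 1 → HasSum (fun k => z ^ k • u k) ((1 - z) • η z) := fun z hz => by
    simpa only [hu] using (hη z hz).pow_smul_sub_shift
  have hLHS : ∀ z : ℂ, ‖z‖ < 1 → HasSum (fun k => z ^ k • ((k • u k) - A₀ *ᵥ u k))
      (z • deriv (fun w => (1 - w) • η w) z - A₀ *ᵥ ((1 - z) • η z)) := fun z hz => by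
    simpa only [smul_sub, mulVec_smul] using
      (hasSum_pow_smul_nsmul_deriv hξ hz).sub ((hξ z hz).mulVec_left A₀)
  have hRHS : ∀ z : ℂ, ‖z‖ < 1 → HasSum
      (fun k => z ^ k • (if k = 0 then 0 else
        ∑ ℓ ∈ range (k - 1 + 1), Gc (k - 1 - ℓ) *ᵥ u ℓ - (A₁ + 1) *ᵥ d (k - 1)))
      (z • (G z *ᵥ ((1 - z) • η z) - (A₁ + 1) *ᵥ η z)) := fun z hz => by
    refine HasSum.pow_smul_shift (c := fun k =>
      ∑ ℓ ∈ range (k + 1), Gc (k - ℓ) *ᵥ u ℓ - (A₁ + 1) *ᵥ d k) ?_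
    simpa only [smul_sub, mulVec_smul] using
      ((hG z hz).pow_smul_sum_range_mulVec (hξ z hz)).sub ((hη z hz).mulVec_left (A₁ + 1))
  have hcoeff := eq_of_hasSum_pow_smul_of_eq_of_ne_zero hLHS hRHS fun z hz hz₀ =>
    smul_deriv_one_sub_smul_sub_mulVec hz₀ (by rintro rfl; simp at hz) (hode z hz hz₀)
  intro k hk
  obtain ⟨m, rfl⟩ := Nat.exists_eq_add_of_le' hk
  have hm := congrFun hcoeff (m + 1)
  simp only [add_tsub_cancel_right, Nat.add_one_ne_zero, if_false] at hm
  rw [sub_mulVec, smul_mulVec, one_mulVec]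
  push_cast at hm ⊢
  linear_combination (norm := module) -hm

/-- Lemma 1 of the paper (two-step recurrence formula): the Taylor coefficients `d_k` of a
holomorphic solution `η(z) = Σ z^k d_k` of `η′ = (A₀/z + A₁/(z−1) + G(z)) η` on the unit
disk satisfy, with `u_k := d_k − d_{k−1}` (and `u₀ := d₀`, `d_{−1} := 0`),
`(A₀ − k) u_k = (A₁+1) d_{k−1} − Σ_{ℓ=0}^{k−1} G_{k−1−ℓ} u_ℓ` for every `k ≥ 1`;
equivalently, `d_k` can be computed from `d₀` by the two-step recurrence of the lemma. -/
theorem coefficient_recurrence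
    (A₀ A₁ : Matrix (Fin 2) (Fin 2) ℂ)
    (hinv : ∀ k : ℕ, 1 ≤ k →
      IsUnit (A₀ - (k : ℂ) • (1 : Matrix (Fin 2) (Fin 2) ℂ)))
    (Gc : ℕ → Matrix (Fin 2) (Fin 2) ℂ)
    (G : ℂ → Matrix (Fin 2) (Fin 2) ℂ)
    (hG : ∀ z : ℂ, ‖z‖ < 1 → HasSum (fun k : ℕ => z ^ k • Gc k) (G z))
    (η : ℂ → Fin 2 → ℂ) (d : ℕ → Fin 2 → ℂ)
    (hη : ∀ z : ℂ, ‖z‖ < 1 → HasSum (fun k : ℕ => z ^ k • d k) (η z))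
    (hode : ∀ z : ℂ, ‖z‖ < 1 → z ≠ 0 →
      HasDerivAt η ((z⁻¹ • A₀ + (z - 1)⁻¹ • A₁ + G z).mulVec (η z)) z)
    (u : ℕ → Fin 2 → ℂ)
    (hu : ∀ ℓ : ℕ, u ℓ = if ℓ = 0 then d 0 else d ℓ - d (ℓ - 1)) :
    ∀ k : ℕ, 1 ≤ k →
      (A₀ - (k : ℂ) • (1 : Matrix (Fin 2) (Fin 2) ℂ)).mulVec (u k) =
        (A₁ + (1 : Matrix (Fin 2) (Fin 2) ℂ)).mulVec (d (k - 1))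
          - ∑ ℓ ∈ Finset.range k, (Gc (k - 1 - ℓ)).mulVec (u ℓ) :=
  coefficient_recurrence_general A₀ A₁ Gc G hG η d hη hode u hu
end

section
/- Let (a_k)_{k≥1} be a sequence of complex numbers, let s ∈ ℂ with Re(s) > 1, and let τ ∈ ℂ with τ ≠ 0. Suppose k^s (a_k − a_{k−1}) → τ as k → ∞. Then the limit a := lim_{k→∞} a_k exists, and for every ε > 0 there exists an integer k₂ such that |a − a_k| ≤ (1+ε) · k · |a_k − a_{k−1}| / (Re(s) − 1) for all integers k ≥ k₂. -/
/-!
Since `‖k ^ s‖ = k ^ Re s`, the hypothesis says `k ^ σ ‖a k - a (k - 1)‖ → ‖τ‖ > 0` with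
`σ = Re s > 1`. Hence the differences are summable, `a` converges, and `‖L - a k‖` is bounded by
the tail sum of the differences. For large `k` each later difference is at most
`(1 + ε) c j ^ (-σ)` and `‖a k - a (k - 1)‖ ≥ c k ^ (-σ)` for some `c < ‖τ‖`, while the tail
`∑_{j > k} j ^ (-σ)` is at most `k ^ (1 - σ) / (σ - 1)`.
-/

open Filter Topology Finset

section RpowTail

variable {σ x : ℝ}

/-- Mean value theorem for `t ↦ t ^ (1 - σ)` on `[x, x + 1]`, whose derivative increases. -/
lemma mul_rpow_neg_le_rpow_sub_rpow (hσ : 1 < σ) (hx : 0 < x) :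
    (σ - 1) * (x + 1) ^ (-σ) ≤ x ^ (1 - σ) - (x + 1) ^ (1 - σ) := by
  obtain ⟨c, ⟨hxc, hc⟩, hslope⟩ := exists_hasDerivAt_eq_slope (fun t : ℝ => t ^ (1 - σ))
      (fun t : ℝ => (1 - σ) * t ^ (-σ)) (lt_add_one x)
      (fun t ht => (Real.continuousAt_rpow_const t (1 - σ)
        (Or.inl (hx.trans_le ht.1).ne')).continuousWithinAt)
      (fun t ht => by
        simpa only [sub_sub_cancel_left] using
          Real.hasDerivAt_rpow_const (p := 1 - σ) (Or.inl (hx.trans ht.1).ne'))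
  have hc0 : 0 < c := hx.trans hxc
  rw [add_sub_cancel_left, div_one] at hslope
  have hmono : (x + 1) ^ (-σ) ≤ c ^ (-σ) := Real.rpow_le_rpow_of_nonpos hc0 hc.le (by linarith)
  nlinarith

lemma sum_range_rpow_neg_le_s8 (hσ : 1 < σ) (hx : 0 < x) (n : ℕ) :
    ∑ i ∈ range n, (x + i + 1) ^ (-σ) ≤ x ^ (1 - σ) / (σ - 1) := by
  have hσ1 : 0 < σ - 1 := by linarith
  set f : ℕ → ℝ := fun i => (x + i) ^ (1 - σ)
  calc ∑ i ∈ range n, (x + i + 1) ^ (-σ)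
      ≤ ∑ i ∈ range n, (f i - f (i + 1)) / (σ - 1) := by
        gcongr with i
        rw [le_div_iff₀' hσ1]
        simpa only [f, Nat.cast_succ, add_assoc] using
          mul_rpow_neg_le_rpow_sub_rpow hσ (x := x + i) (by positivity)
    _ = (f 0 - f n) / (σ - 1) := by rw [← sum_div, sum_range_sub']
    _ ≤ f 0 / (σ - 1) := by gcongr; exact sub_le_self _ (by positivity)
    _ = x ^ (1 - σ) / (σ - 1) := by simp [f]

lemma summable_add_nat_rpow_neg (hσ : 1 < σ) (hx : 0 < x) :
    Summable fun i : ℕ => (x + i + 1) ^ (-σ) :=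
  summable_of_sum_range_le (fun _ => by positivity) (sum_range_rpow_neg_le_s8 hσ hx)

lemma tsum_add_nat_rpow_neg_le (hσ : 1 < σ) (hx : 0 < x) :
    ∑' i : ℕ, (x + i + 1) ^ (-σ) ≤ x ^ (1 - σ) / (σ - 1) :=
  Real.tsum_le_of_sum_range_le (fun _ => by positivity) (sum_range_rpow_neg_le_s8 hσ hx)

end RpowTail

section RpowMulTendsto

variable {σ T c : ℝ} {b : ℕ → ℝ}

lemma eventually_le_mul_rpow_neg (hb : Tendsto (fun k : ℕ => (k : ℝ) ^ σ * b k) atTop (𝓝 T))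
    (hc : T < c) : ∀ᶠ k : ℕ in atTop, b k ≤ c * (k : ℝ) ^ (-σ) := by
  filter_upwards [hb.eventually_lt_const hc, eventually_gt_atTop 0] with k hk hk0
  have : 0 < (k : ℝ) ^ σ := by positivity
  rw [Real.rpow_neg k.cast_nonneg, ← div_eq_mul_inv, le_div_iff₀' this]
  exact hk.le

lemma eventually_mul_rpow_neg_le (hb : Tendsto (fun k : ℕ => (k : ℝ) ^ σ * b k) atTop (𝓝 T))
    (hc : c < T) : ∀ᶠ k : ℕ in atTop, c * (k : ℝ) ^ (-σ) ≤ b k := by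
  filter_upwards [hb.eventually_const_lt hc, eventually_gt_atTop 0] with k hk hk0
  have : 0 < (k : ℝ) ^ σ := by positivity
  rw [Real.rpow_neg k.cast_nonneg, ← div_eq_mul_inv, div_le_iff₀' this]
  exact hk.le

lemma summable_of_tendsto_rpow_mul (hσ : 1 < σ) (hb0 : 0 ≤ b)
    (hb : Tendsto (fun k : ℕ => (k : ℝ) ^ σ * b k) atTop (𝓝 T)) : Summable b :=
  .of_norm_bounded_eventually_nat
    ((Real.summable_nat_rpow.2 (by linarith : -σ < -1)).mul_left (T + 1)) <| by
      filter_upwards [eventually_le_mul_rpow_neg hb (lt_add_one T)] with k hk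
      rwa [Real.norm_of_nonneg (hb0 k)]

lemma eventually_tsum_tail_le (hσ : 1 < σ) (hT : 0 < T) (hb0 : 0 ≤ b)
    (hb : Tendsto (fun k : ℕ => (k : ℝ) ^ σ * b k) atTop (𝓝 T)) {ε : ℝ} (hε : 0 < ε) :
    ∀ᶠ k : ℕ in atTop, ∑' m, b (k + m + 1) ≤ (1 + ε) * k * b k / (σ - 1) := by
  set c := 2 * T / (2 + ε)
  have hcT : c < T := by rw [div_lt_iff₀ (by positivity)]; nlinarith
  have hTc : T < (1 + ε) * c := by
    rw [mul_div_assoc', lt_div_iff₀ (by positivity)]; nlinarith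
  filter_upwards [eventually_forall_ge_atTop.2 (eventually_le_mul_rpow_neg hb hTc),
    eventually_mul_rpow_neg_le hb hcT, eventually_gt_atTop 0] with k hup hlow hk
  have hk' : (0 : ℝ) < k := by exact_mod_cast hk
  have htail : ∀ m : ℕ, b (k + m + 1) ≤ (1 + ε) * c * ((k : ℝ) + m + 1) ^ (-σ) := fun m => by
    simpa only [Nat.cast_add, Nat.cast_one] using hup (k + m + 1) (by omega)
  have hmajor := (summable_add_nat_rpow_neg hσ hk').mul_left ((1 + ε) * c)
  calc ∑' m, b (k + m + 1)
      ≤ ∑' m : ℕ, (1 + ε) * c * ((k : ℝ) + m + 1) ^ (-σ) :=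
        Summable.tsum_le_tsum htail (.of_nonneg_of_le (fun _ => hb0 _) htail hmajor) hmajor
    _ = (1 + ε) * c * ∑' m : ℕ, ((k : ℝ) + m + 1) ^ (-σ) := tsum_mul_left
    _ ≤ (1 + ε) * c * ((k : ℝ) ^ (1 - σ) / (σ - 1)) := by
        gcongr
        exact tsum_add_nat_rpow_neg_le hσ hk'
    _ = (1 + ε) * k * (c * (k : ℝ) ^ (-σ)) / (σ - 1) := by
        rw [sub_eq_add_neg, Real.rpow_add hk', Real.rpow_one]; ring
    _ ≤ (1 + ε) * k * b k / (σ - 1) := by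
        have : 0 < σ - 1 := by linarith
        gcongr

end RpowMulTendsto

/-- The general a posteriori error estimate extracted from the proof of Theorem 4 of the
paper: if `k^s (a_k − a_{k−1}) → τ ≠ 0` with `Re(s) > 1`, then `a_k` converges to some
limit `a`, and for every `ε > 0` eventually
`|a − a_k| ≤ (1+ε)·k·|a_k − a_{k−1}|/(Re(s) − 1)`. -/
theorem a_posteriori_estimate
    (a : ℕ → ℂ) (s : ℂ) (hs : 1 < s.re) (τ : ℂ) (hτ : τ ≠ 0)
    (hlim : Tendsto (fun k : ℕ => (k : ℂ) ^ s * (a k - a (k - 1))) atTop (𝓝 τ)) :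
    ∃ L : ℂ, Tendsto a atTop (𝓝 L) ∧
      ∀ ε : ℝ, 0 < ε → ∃ k₂ : ℕ, ∀ k ≥ k₂,
        ‖L - a k‖ ≤
          (1 + ε) * (k : ℝ) * ‖a k - a (k - 1)‖ / (s.re - 1) := by
  set b : ℕ → ℝ := fun k => ‖a k - a (k - 1)‖
  have hb0 : 0 ≤ b := fun _ => norm_nonneg _
  have hb : Tendsto (fun k : ℕ => (k : ℝ) ^ s.re * b k) atTop (𝓝 ‖τ‖) := by
    simpa only [norm_mul, Complex.norm_natCast_cpow_of_re_ne_zero _ (by linarith : s.re ≠ 0)]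
      using hlim.norm
  have hdist : ∀ n, dist (a n) (a n.succ) = b (n + 1) := fun n => by
    simp [b, dist_eq_norm']
  have hsum : Summable fun n => b (n + 1) :=
    (summable_nat_add_iff 1).2 (summable_of_tendsto_rpow_mul hs hb0 hb)
  obtain ⟨L, hL⟩ := cauchySeq_tendsto_of_complete
    (cauchySeq_of_summable_dist (f := a) (by simpa only [hdist] using hsum))
  refine ⟨L, hL, fun ε hε => eventually_atTop.1 ?_⟩
  filter_upwards [eventually_tsum_tail_le hs (norm_pos_iff.2 hτ) hb0 hb hε] with k hk
  calc ‖L - a k‖ = dist (a k) L := by rw [dist_comm, dist_eq_norm]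
    _ ≤ ∑' m, b (k + m + 1) :=
        dist_le_tsum_of_dist_le_of_tendsto _ (fun n => (hdist n).le) hsum hL k
    _ ≤ (1 + ε) * k * b k / (s.re - 1) := hk
end

section
/- Let c, λ, μ, γ ∈ ℂ with c ∉ {0,1}, set a₁₂ := λ, b₁₂ := c(λ+μ+γ)/(1−c), r₁₂ := (λ+cμ+c²γ)/(c−1), and define A := [[−1/2, a₁₂],[0,0]], B := [[−1/2, b₁₂],[0,0]], R := [[−1/2, r₁₂],[0,0]], S := [[0,0],[1,0]]. Let U ⊆ ℂ \ {0,1,c} be open and let w : U → ℂ be twice differentiable with z(z−1)(z−c) w″(z) + (1/2)(3z² − 2(1+c)z + c) w′(z) + (λ + μz + γz²) w(z) = 0 for all z ∈ U. Then y : U → ℂ² defined by y(z) := (−c·w′(z), w(z)) satisfies y′(z) = (A/z + B/(z−1) + R/(z−c) − S/c) y(z) for all z ∈ U. -/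
/-!
The second row of the system just says `y₀ = -c w'`. The first row is the equation divided by
`z (z - 1) (z - c)`: the diagonal coefficient `-(1/z + 1/(z-1) + 1/(z-c)) / 2` is `-1/2` times the
logarithmic derivative of that cubic, and `a₁₂/z + b₁₂/(z-1) + r₁₂/(z-c)` is the partial-fraction
expansion of `c (λ + μ z + γ z²) / (z (z - 1) (z - c))`.
-/

open Matrix

theorem HasDerivAt.vecTwo {𝕜 E : Type*} [NontriviallyNormedField 𝕜] [NormedAddCommGroup E]
    [NormedSpace 𝕜 E] {f g : 𝕜 → E} {f' g' : E} {x : 𝕜}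
    (hf : HasDerivAt f f' x) (hg : HasDerivAt g g' x) :
    HasDerivAt (fun t => ![f t, g t]) ![f', g'] x :=
  hasDerivAt_pi.2 <| Fin.forall_fin_two.2 ⟨hf, hg⟩

section Algebra

variable {K : Type*} [Field K]

theorem mulVec_ellipsoidal_system (z c a b r u v : K) :
    (z⁻¹ • !![-1 / 2, a; 0, 0] + (z - 1)⁻¹ • !![-1 / 2, b; 0, 0]
        + (z - c)⁻¹ • !![-1 / 2, r; 0, 0] - c⁻¹ • !![0, 0; 1, 0]) *ᵥ ![u, v]
      = ![-(z⁻¹ + (z - 1)⁻¹ + (z - c)⁻¹) / 2 * u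
            + (a * z⁻¹ + b * (z - 1)⁻¹ + r * (z - c)⁻¹) * v,
          -c⁻¹ * u] := by
  ext i
  fin_cases i
  · simp [mulVec, dotProduct, Fin.sum_univ_two]
    ring
  · simp [mulVec, dotProduct, Fin.sum_univ_two]

theorem inv_add_inv_sub_add_inv_sub {z c : K} (hz0 : z ≠ 0) (hz1 : z - 1 ≠ 0) (hzc : z - c ≠ 0) :
    z⁻¹ + (z - 1)⁻¹ + (z - c)⁻¹
      = (3 * z ^ 2 - 2 * (1 + c) * z + c) / (z * (z - 1) * (z - c)) := by
  field_simp
  ring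

theorem ellipsoidal_partial_fractions {z c : K} (lam mu gam : K) (hc1 : c ≠ 1) (hz0 : z ≠ 0)
    (hz1 : z - 1 ≠ 0) (hzc : z - c ≠ 0) :
    lam * z⁻¹ + c * (lam + mu + gam) / (1 - c) * (z - 1)⁻¹
        + (lam + c * mu + c ^ 2 * gam) / (c - 1) * (z - c)⁻¹
      = c * (lam + mu * z + gam * z ^ 2) / (z * (z - 1) * (z - c)) := by
  have h1c : 1 - c ≠ 0 := sub_ne_zero.2 hc1.symm
  have hc1' : c - 1 ≠ 0 := sub_ne_zero.2 hc1
  field_simp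
  ring

end Algebra

theorem ellipsoidal_to_system_general
    (c lam mu gam : ℂ) (hc0 : c ≠ 0) (hc1 : c ≠ 1)
    (a12 b12 r12 : ℂ)
    (ha12 : a12 = lam)
    (hb12 : b12 = c * (lam + mu + gam) / (1 - c))
    (hr12 : r12 = (lam + c * mu + c ^ 2 * gam) / (c - 1))
    (A B R S : Matrix (Fin 2) (Fin 2) ℂ)
    (hA : A = !![-1 / 2, a12; 0, 0]) (hB : B = !![-1 / 2, b12; 0, 0])
    (hR : R = !![-1 / 2, r12; 0, 0]) (hS : S = !![0, 0; 1, 0])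
    (U : Set ℂ) (hU' : U ⊆ {(0 : ℂ), 1, c}ᶜ)
    (w w' w'' : ℂ → ℂ)
    (hw' : ∀ z ∈ U, HasDerivAt w (w' z) z)
    (hw'' : ∀ z ∈ U, HasDerivAt w' (w'' z) z)
    (hode : ∀ z ∈ U,
      z * (z - 1) * (z - c) * w'' z + (1 / 2) * (3 * z ^ 2 - 2 * (1 + c) * z + c) * w' z
        + (lam + mu * z + gam * z ^ 2) * w z = 0)
    (y : ℂ → Fin 2 → ℂ) (hy : ∀ z : ℂ, y z = ![-c * w' z, w z]) :
    ∀ z ∈ U,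
      HasDerivAt y
        ((z⁻¹ • A + (z - 1)⁻¹ • B + (z - c)⁻¹ • R - c⁻¹ • S).mulVec (y z)) z := by
  intro z hz
  obtain ⟨hz0, hz1, hzc⟩ : z ≠ 0 ∧ z ≠ 1 ∧ z ≠ c := by simpa [not_or] using hU' hz
  rw [← sub_ne_zero] at hz1 hzc
  subst a12 b12 r12 A B R S
  rw [hy z, funext hy, mulVec_ellipsoidal_system, inv_add_inv_sub_add_inv_sub hz0 hz1 hzc,
    ellipsoidal_partial_fractions lam mu gam hc1 hz0 hz1 hzc]
  convert ((hw'' z hz).const_mul (-c)).vecTwo (hw' z hz) using 2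
  · field_simp
    linear_combination 2 * hode z hz
  · field_simp

/-- Forward direction of the correspondence (3.2)–(3.3) of the paper: a solution `w` of the
angular ellipsoidal wave equation in algebraic form gives a solution
`y = (−c w′, w)` of the associated 2×2 first-order system. -/
theorem ellipsoidal_to_system
    (c lam mu gam : ℂ) (hc0 : c ≠ 0) (hc1 : c ≠ 1)
    (a12 b12 r12 : ℂ)
    (ha12 : a12 = lam)
    (hb12 : b12 = c * (lam + mu + gam) / (1 - c))
    (hr12 : r12 = (lam + c * mu + c ^ 2 * gam) / (c - 1))
    (A B R S : Matrix (Fin 2) (Fin 2) ℂ)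
    (hA : A = !![-1 / 2, a12; 0, 0]) (hB : B = !![-1 / 2, b12; 0, 0])
    (hR : R = !![-1 / 2, r12; 0, 0]) (hS : S = !![0, 0; 1, 0])
    (U : Set ℂ) (hU : IsOpen U) (hU' : U ⊆ {(0 : ℂ), 1, c}ᶜ)
    (w w' w'' : ℂ → ℂ)
    (hw' : ∀ z ∈ U, HasDerivAt w (w' z) z)
    (hw'' : ∀ z ∈ U, HasDerivAt w' (w'' z) z)
    (hode : ∀ z ∈ U,
      z * (z - 1) * (z - c) * w'' z + (1 / 2) * (3 * z ^ 2 - 2 * (1 + c) * z + c) * w' z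
        + (lam + mu * z + gam * z ^ 2) * w z = 0)
    (y : ℂ → Fin 2 → ℂ) (hy : ∀ z : ℂ, y z = ![-c * w' z, w z]) :
    ∀ z ∈ U,
      HasDerivAt y
        ((z⁻¹ • A + (z - 1)⁻¹ • B + (z - c)⁻¹ • R - c⁻¹ • S).mulVec (y z)) z :=
  ellipsoidal_to_system_general c lam mu gam hc0 hc1 a12 b12 r12 ha12 hb12 hr12 A B R S hA hB hR hS
    U hU' w w' w'' hw' hw'' hode y hy
end

section
/- Let c ∈ ℂ \ {0,1} and a₁₂, b₁₂, r₁₂ ∈ ℂ, and define A := [[−1/2, a₁₂],[0,0]], B := [[−1/2, b₁₂],[0,0]], R := [[−1/2, r₁₂],[0,0]], S := [[0,0],[1,0]]. Let U ⊆ ℂ \ {0,1,c} be open and let y : U → ℂ² be differentiable with y′(z) = (A/z + B/(z−1) + R/(z−c) − S/c) y(z) for all z ∈ U. Then w(z) := e₂ᵀ y(z) is twice differentiable on U and satisfies z(z−1)(z−c) w″(z) + (1/2)(3z² − 2(1+c)z + c) w′(z) + (λ + μz + γz²) w(z) = 0 on U, where λ := a₁₂, μ := −(c(a₁₂+b₁₂)+a₁₂+r₁₂)/c,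 and γ := (a₁₂+b₁₂+r₁₂)/c. -/
/-!
Write `y = (p, q)`. The second row of the system reads `q' = -p/c`, so `w = q` is differentiable
with `w' = -p/c`, and the first row then gives `w''`. Multiplied by `z(z-1)(z-c)`, the diagonal
part of the first row, `-½(1/z + 1/(z-1) + 1/(z-c))`, becomes `-½ (z(z-1)(z-c))'`, which cancels
the first-order term of the equation, and the off-diagonal part becomes the accessory polynomial
`λ + μz + γz²` times `w`.
-/

open Matrix

lemma hasDerivAt_deriv_of_isOpen {𝕜 F : Type*} [NontriviallyNormedField 𝕜]
    [NormedAddCommGroup F] [NormedSpace 𝕜 F] {f g : 𝕜 → F} {g' : F} {U : Set 𝕜} {z : 𝕜}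
    (hU : IsOpen U) (hz : z ∈ U) (hf : ∀ t ∈ U, HasDerivAt f (g t) t)
    (hg : HasDerivAt g g' z) : HasDerivAt (deriv f) g' z :=
  hg.congr_of_eventuallyEq <|
    Filter.eventuallyEq_of_mem (hU.mem_nhds hz) fun t ht => (hf t ht).deriv

lemma vecCons_zero_one_dotProduct {R : Type*} [NonAssocSemiring R] (v : Fin 2 → R) :
    ![0, 1] ⬝ᵥ v = v 1 := by
  simp [dotProduct, Fin.sum_univ_two]

section EllipsoidalSystem

variable (c a12 b12 r12 z : ℂ) (v : Fin 2 → ℂ)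

/-- `A/z + B/(z-1) + R/(z-c) - S/c` in the notation of the statement. -/
noncomputable abbrev ellipsoidalSystemMatrix : Matrix (Fin 2) (Fin 2) ℂ :=
  z⁻¹ • !![-1 / 2, a12; 0, 0] + (z - 1)⁻¹ • !![-1 / 2, b12; 0, 0]
    + (z - c)⁻¹ • !![-1 / 2, r12; 0, 0] - c⁻¹ • !![0, 0; 1, 0]

lemma ellipsoidalSystemMatrix_mulVec_zero :
    (ellipsoidalSystemMatrix c a12 b12 r12 z).mulVec v 0 =
      -1 / 2 * (z⁻¹ + (z - 1)⁻¹ + (z - c)⁻¹) * v 0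
        + (a12 * z⁻¹ + b12 * (z - 1)⁻¹ + r12 * (z - c)⁻¹) * v 1 := by
  simp only [mulVec, dotProduct, Fin.sum_univ_two, Matrix.add_apply, Matrix.sub_apply,
    Matrix.smul_apply, of_apply, cons_val_zero, cons_val_one, cons_val', cons_val_fin_one,
    smul_eq_mul, mul_zero, sub_zero]
  ring

lemma ellipsoidalSystemMatrix_mulVec_one :
    (ellipsoidalSystemMatrix c a12 b12 r12 z).mulVec v 1 = -c⁻¹ * v 0 := by
  simp [mulVec, dotProduct, Fin.sum_univ_two]

lemma ellipsoidal_identity (hz0 : z ≠ 0) (hz1 : z ≠ 1) (hzc : z ≠ c) (hc0 : c ≠ 0) :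
    z * (z - 1) * (z - c) * (-c⁻¹ * (ellipsoidalSystemMatrix c a12 b12 r12 z).mulVec v 0)
      + 1 / 2 * (3 * z ^ 2 - 2 * (1 + c) * z + c) * (-c⁻¹ * v 0)
      + (a12 + -(c * (a12 + b12) + a12 + r12) / c * z + (a12 + b12 + r12) / c * z ^ 2) * v 1
      = 0 := by
  have hz1' : z - 1 ≠ 0 := sub_ne_zero.mpr hz1
  have hzc' : z - c ≠ 0 := sub_ne_zero.mpr hzc
  rw [ellipsoidalSystemMatrix_mulVec_zero]
  field_simp
  ring

end EllipsoidalSystem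

theorem system_to_ellipsoidal_general
    (c a12 b12 r12 : ℂ) (hc0 : c ≠ 0)
    (A B R S : Matrix (Fin 2) (Fin 2) ℂ)
    (hA : A = !![-1 / 2, a12; 0, 0]) (hB : B = !![-1 / 2, b12; 0, 0])
    (hR : R = !![-1 / 2, r12; 0, 0]) (hS : S = !![0, 0; 1, 0])
    (U : Set ℂ) (hU : IsOpen U) (hU' : U ⊆ {(0 : ℂ), 1, c}ᶜ)
    (y : ℂ → Fin 2 → ℂ)
    (hy : ∀ z ∈ U,
      HasDerivAt y ((z⁻¹ • A + (z - 1)⁻¹ • B + (z - c)⁻¹ • R - c⁻¹ • S).mulVec (y z)) z)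
    (w : ℂ → ℂ) (hw : ∀ z : ℂ, w z = (![0, 1] : Fin 2 → ℂ) ⬝ᵥ y z)
    (lam mu gam : ℂ)
    (hlam : lam = a12)
    (hmu : mu = -(c * (a12 + b12) + a12 + r12) / c)
    (hgam : gam = (a12 + b12 + r12) / c) :
    ∀ z ∈ U,
      HasDerivAt w (deriv w z) z ∧
      HasDerivAt (deriv w) (deriv (deriv w) z) z ∧
      z * (z - 1) * (z - c) * deriv (deriv w) z
        + (1 / 2) * (3 * z ^ 2 - 2 * (1 + c) * z + c) * deriv w z
        + (lam + mu * z + gam * z ^ 2) * w z = 0 := by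
  subst hA hB hR hS lam mu gam
  have hw_eq : w = fun t => y t 1 := funext fun t => by rw [hw, vecCons_zero_one_dotProduct]
  subst hw_eq
  have hy' (i : Fin 2) (t : ℂ) (ht : t ∈ U) :
      HasDerivAt (fun s => y s i) ((ellipsoidalSystemMatrix c a12 b12 r12 t).mulVec (y t) i) t :=
    hasDerivAt_pi.mp (hy t ht) i
  have hw' (t : ℂ) (ht : t ∈ U) : HasDerivAt (fun s => y s 1) (-c⁻¹ * y t 0) t := by
    simpa only [ellipsoidalSystemMatrix_mulVec_one] using hy' 1 t ht
  intro z hz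
  have hw'' : HasDerivAt (deriv fun s => y s 1)
      (-c⁻¹ * (ellipsoidalSystemMatrix c a12 b12 r12 z).mulVec (y z) 0) z :=
    hasDerivAt_deriv_of_isOpen hU hz hw' ((hy' 0 z hz).const_mul _)
  obtain ⟨hz0, hz1, hzc⟩ : z ≠ 0 ∧ z ≠ 1 ∧ z ≠ c := by simpa [not_or] using hU' hz
  rw [hw''.deriv, (hw' z hz).deriv]
  exact ⟨hw' z hz, hw'', ellipsoidal_identity c a12 b12 r12 z (y z) hz0 hz1 hzc hc0⟩

/-- Converse direction of the correspondence (3.2)–(3.3) of the paper: if `y` solves the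
2×2 first-order system, then `w := e₂ᵀ y` is twice differentiable and solves the angular
ellipsoidal wave equation in algebraic form with `λ := a₁₂`,
`μ := −(c(a₁₂+b₁₂)+a₁₂+r₁₂)/c`, `γ := (a₁₂+b₁₂+r₁₂)/c`. -/
theorem system_to_ellipsoidal
    (c a12 b12 r12 : ℂ) (hc0 : c ≠ 0) (hc1 : c ≠ 1)
    (A B R S : Matrix (Fin 2) (Fin 2) ℂ)
    (hA : A = !![-1 / 2, a12; 0, 0]) (hB : B = !![-1 / 2, b12; 0, 0])
    (hR : R = !![-1 / 2, r12; 0, 0]) (hS : S = !![0, 0; 1, 0])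
    (U : Set ℂ) (hU : IsOpen U) (hU' : U ⊆ {(0 : ℂ), 1, c}ᶜ)
    (y : ℂ → Fin 2 → ℂ)
    (hy : ∀ z ∈ U,
      HasDerivAt y ((z⁻¹ • A + (z - 1)⁻¹ • B + (z - c)⁻¹ • R - c⁻¹ • S).mulVec (y z)) z)
    (w : ℂ → ℂ) (hw : ∀ z : ℂ, w z = (![0, 1] : Fin 2 → ℂ) ⬝ᵥ y z)
    (lam mu gam : ℂ)
    (hlam : lam = a12)
    (hmu : mu = -(c * (a12 + b12) + a12 + r12) / c)
    (hgam : gam = (a12 + b12 + r12) / c) :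
    ∀ z ∈ U,
      HasDerivAt w (deriv w z) z ∧
      HasDerivAt (deriv w) (deriv (deriv w) z) z ∧
      z * (z - 1) * (z - c) * deriv (deriv w) z
        + (1 / 2) * (3 * z ^ 2 - 2 * (1 + c) * z + c) * deriv w z
        + (lam + mu * z + gam * z ^ 2) * w z = 0 :=
  system_to_ellipsoidal_general c a12 b12 r12 hc0 A B R S hA hB hR hS U hU hU' y hy w hw lam mu gam
    hlam hmu hgam
end

section
/- Let c ∈ ℂ \ {0,1} and a₁₂, b₁₂, r₁₂ ∈ ℂ, and for parameters (a, b, r, e) write M(a,b,r,e; z) := [[−1/2, a],[0,0]]/z + [[−1/2, b],[0,0]]/(z−1) + [[−1/2, r],[0,0]]/(z−e) − (1/e)[[0,0],[1,0]]. Let U be open in ℂ and y : U → ℂ² differentiable with y′(z) = M(a₁₂, b₁₂, r₁₂, c; z) y(z) on U. Set ĉ := c/(c−1) and define ŷ(ẑ) := [[−1,0],[0,1]] · y(c + (1−c)ẑ). Then ŷ is differentiable at every ẑ with c + (1−c)ẑ ∈ U and ẑ ∉ {0, 1, ĉ}, and there satisfies ŷ′(ẑ) = M(−r₁₂, −b₁₂,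 −a₁₂, ĉ; ẑ) ŷ(ẑ). In particular, the affine map z = c + (1−c)ẑ carries the singular points z = c and z = 1 to ẑ = 0 and ẑ = 1 respectively. -/
open Matrix

/-!
The substitution `z = c + (1 - c) ẑ` multiplies derivatives by `1 - c`, and conjugation by
`diag(-1, 1)` negates the upper-right entry of each residue matrix and the lower-left entry of the
constant term. Since `z - c = (1 - c) ẑ`, `z - 1 = (1 - c) (ẑ - 1)` and `z = (1 - c) (ẑ - ĉ)`,
the factor `1 - c` turns the poles `c, 1, 0` into `0, 1, ĉ` with the same (conjugated) residue
matrices, and `-(1 - c) / c = -1 / ĉ` turns the constant term into that of the new system.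
-/

theorem HasDerivAt.matrix_mulVec {𝕜 : Type*} [NontriviallyNormedField 𝕜] [CompleteSpace 𝕜]
    {n : Type*} [Fintype n] [DecidableEq n] (P : Matrix n n 𝕜) {f : 𝕜 → n → 𝕜} {f' : n → 𝕜}
    {x : 𝕜} (hf : HasDerivAt f f' x) : HasDerivAt (fun x => P *ᵥ f x) (P *ᵥ f') x :=
  (LinearMap.toContinuousLinearMap (Matrix.toLin' P)).hasFDerivAt.comp_hasDerivAt x hf

theorem HasDerivAt.comp_affine {𝕜 : Type*} [NontriviallyNormedField 𝕜] {F : Type*}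
    [NormedAddCommGroup F] [NormedSpace 𝕜 F] {f : 𝕜 → F} {f' : F} (p q w : 𝕜)
    (hf : HasDerivAt f f' (p + q * w)) : HasDerivAt (fun w => f (p + q * w)) (q • f') w := by
  have hAffine := ((hasDerivAt_id w).const_mul q).const_add p
  simpa [Function.comp_def] using hf.scomp w hAffine

theorem HasDerivAt.mulVec_comp_affine {𝕜 : Type*} [NontriviallyNormedField 𝕜] [CompleteSpace 𝕜]
    {n : Type*} [Fintype n] [DecidableEq n] {P Q A : Matrix n n 𝕜} (hQP : Q * P = 1)
    {y : 𝕜 → n → 𝕜} (p q w : 𝕜) (hy : HasDerivAt y (A *ᵥ y (p + q * w)) (p + q * w)) :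
    HasDerivAt (fun w => P *ᵥ y (p + q * w)) ((q • (P * A * Q)) *ᵥ (P *ᵥ y (p + q * w))) w := by
  convert (hy.comp_affine p q w).matrix_mulVec P using 1
  rw [smul_mulVec, mulVec_smul, mulVec_mulVec, Matrix.mul_assoc, hQP, Matrix.mul_one,
    ← mulVec_mulVec]

section Field

variable {K : Type*} [Field K]

def ellipsoidalMatrix (a b r e z : K) : Matrix (Fin 2) (Fin 2) K :=
  z⁻¹ • !![-1 / 2, a; 0, 0] + (z - 1)⁻¹ • !![-1 / 2, b; 0, 0]
    + (z - e)⁻¹ • !![-1 / 2, r; 0, 0] - e⁻¹ • !![0, 0; 1, 0]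

def signFlip : Matrix (Fin 2) (Fin 2) K := !![-1, 0; 0, 1]

theorem signFlip_mul_self : (signFlip : Matrix (Fin 2) (Fin 2) K) * signFlip = 1 := by
  ext i j; fin_cases i <;> fin_cases j <;> simp [signFlip]

theorem signFlip_conj_residue (a : K) :
    signFlip * !![-1 / 2, a; 0, 0] * signFlip = !![-1 / 2, -a; 0, 0] := by
  ext i j; fin_cases i <;> fin_cases j <;> simp [signFlip]

theorem signFlip_conj_lower :
    signFlip * !![0, 0; 1, 0] * signFlip = -(!![0, 0; 1, 0] : Matrix (Fin 2) (Fin 2) K) := by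
  ext i j; fin_cases i <;> fin_cases j <;> simp [signFlip]

theorem smul_signFlip_conj_ellipsoidalMatrix {c : K} (hc : c ≠ 1) (a b r w : K) :
    (1 - c) • (signFlip * ellipsoidalMatrix a b r c (c + (1 - c) * w) * signFlip)
      = ellipsoidalMatrix (-r) (-b) (-a) (c / (c - 1)) w := by
  have h1c : (1 : K) - c ≠ 0 := sub_ne_zero.mpr hc.symm
  have hz : c + (1 - c) * w = (1 - c) * (w - c / (c - 1)) := by
    field_simp [sub_ne_zero.mpr hc]; ring
  have hz1 : c + (1 - c) * w - 1 = (1 - c) * (w - 1) := by ring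
  have hzc : c + (1 - c) * w - c = (1 - c) * w := by ring
  have he : (c / (c - 1))⁻¹ = -((1 - c) * c⁻¹) := by
    rw [inv_div, ← neg_sub, neg_div, div_eq_mul_inv]
  simp only [ellipsoidalMatrix, Matrix.mul_add, Matrix.add_mul, Matrix.mul_sub, Matrix.sub_mul,
    Matrix.mul_smul, Matrix.smul_mul, signFlip_conj_residue, signFlip_conj_lower, smul_add,
    smul_sub, smul_smul, hz1, hzc]
  rw [hz]
  simp only [mul_inv, mul_inv_cancel_left₀ h1c, he]
  module

end Field

theorem ellipsoidal_system_reflection_general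
    (c a12 b12 r12 : ℂ) (hc1 : c ≠ 1)
    (M : ℂ → ℂ → ℂ → ℂ → ℂ → Matrix (Fin 2) (Fin 2) ℂ)
    (hM : ∀ a b r e z : ℂ,
      M a b r e z = z⁻¹ • !![-1 / 2, a; 0, 0] + (z - 1)⁻¹ • !![-1 / 2, b; 0, 0]
        + (z - e)⁻¹ • !![-1 / 2, r; 0, 0] - e⁻¹ • !![0, 0; 1, 0])
    (U : Set ℂ)
    (y : ℂ → Fin 2 → ℂ)
    (hy : ∀ z ∈ U, HasDerivAt y ((M a12 b12 r12 c z).mulVec (y z)) z)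
    (yh : ℂ → Fin 2 → ℂ)
    (hyh : ∀ zh : ℂ, yh zh = (!![-1, 0; 0, 1] : Matrix (Fin 2) (Fin 2) ℂ).mulVec
      (y (c + (1 - c) * zh))) :
    (∀ zh : ℂ, (c + (1 - c) * zh) ∈ U → zh ≠ 0 → zh ≠ 1 → zh ≠ c / (c - 1) →
      HasDerivAt yh ((M (-r12) (-b12) (-a12) (c / (c - 1)) zh).mulVec (yh zh)) zh)
    ∧ c + (1 - c) * 0 = c ∧ c + (1 - c) * 1 = 1 := by
  obtain rfl : M = ellipsoidalMatrix := by
    funext a b r e z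
    exact hM a b r e z
  refine ⟨fun zh hmem _ _ _ => ?_, by ring, by ring⟩
  rw [funext hyh, ← smul_signFlip_conj_ellipsoidalMatrix hc1]
  exact (hy _ hmem).mulVec_comp_affine signFlip_mul_self c (1 - c) zh

/-- The transformation (3.5)–(3.7) of the paper: the affine substitution `z = c + (1−c)ẑ`
together with `ŷ = diag(−1,1)·y` carries the first-order system with parameters
`(a₁₂, b₁₂, r₁₂, c)` to the system of the same structure with parameters
`(−r₁₂, −b₁₂, −a₁₂, ĉ)`, `ĉ := c/(c−1)`; it maps `z = c` to `ẑ = 0` and `z = 1` to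
`ẑ = 1`. -/
theorem ellipsoidal_system_reflection
    (c a12 b12 r12 : ℂ) (hc0 : c ≠ 0) (hc1 : c ≠ 1)
    (M : ℂ → ℂ → ℂ → ℂ → ℂ → Matrix (Fin 2) (Fin 2) ℂ)
    (hM : ∀ a b r e z : ℂ,
      M a b r e z = z⁻¹ • !![-1 / 2, a; 0, 0] + (z - 1)⁻¹ • !![-1 / 2, b; 0, 0]
        + (z - e)⁻¹ • !![-1 / 2, r; 0, 0] - e⁻¹ • !![0, 0; 1, 0])
    (U : Set ℂ) (hU : IsOpen U)
    (y : ℂ → Fin 2 → ℂ)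
    (hy : ∀ z ∈ U, HasDerivAt y ((M a12 b12 r12 c z).mulVec (y z)) z)
    (yh : ℂ → Fin 2 → ℂ)
    (hyh : ∀ zh : ℂ, yh zh = (!![-1, 0; 0, 1] : Matrix (Fin 2) (Fin 2) ℂ).mulVec
      (y (c + (1 - c) * zh))) :
    (∀ zh : ℂ, (c + (1 - c) * zh) ∈ U → zh ≠ 0 → zh ≠ 1 → zh ≠ c / (c - 1) →
      HasDerivAt yh ((M (-r12) (-b12) (-a12) (c / (c - 1)) zh).mulVec (yh zh)) zh)
    ∧ c + (1 - c) * 0 = c ∧ c + (1 - c) * 1 = 1 :=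
  ellipsoidal_system_reflection_general c a12 b12 r12 hc1 M hM U y hy yh hyh
end

section
/- Let μ, t, γ² ∈ ℂ and define A := [[−μ/2−1, −t],[0, μ/2]], B := [[−μ/2−1, t],[0, μ/2]], G₀ := [[0, −4γ²],[1, 0]], K := diag(−1,1). Then KAK = B, KBK = A and KG₀K = −G₀. Consequently, if U ⊆ ℂ \ {0,1} is open and y : U → ℂ² is differentiable with y′(z) = (A/z + B/(z−1) + G₀) y(z) on U, then ỹ(z) := K y(1−z) is differentiable on {z ∈ ℂ : 1−z ∈ U} \ {0,1} and satisfies ỹ′(z) = (A/z + B/(z−1) + G₀) ỹ(z) there. -/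
open Matrix

/-!
Write `M(z) = z⁻¹ A + (z - 1)⁻¹ B + G`. Since `1 - z` swaps the poles `0` and `1`,
`-K M(1 - z) = M(z) K` as soon as `K` intertwines `A` with `B` and anticommutes with `G`;
the chain rule then turns `y' = M y` at `1 - z` into `ỹ' = M ỹ` at `z` for `ỹ(w) = K y(1 - w)`.
-/

variable {𝕜 : Type*} [NontriviallyNormedField 𝕜] {n : Type*} [Fintype n]

def twoPoleCoeff (A B G : Matrix n n 𝕜) (z : 𝕜) : Matrix n n 𝕜 :=
  z⁻¹ • A + (z - 1)⁻¹ • B + G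

theorem HasDerivAt.const_mulVec {m : Type*} [Fintype m] {f : 𝕜 → n → 𝕜} {f' : n → 𝕜} {x : 𝕜}
    (K : Matrix m n 𝕜) (hf : HasDerivAt f f' x) :
    HasDerivAt (fun w => K *ᵥ f w) (K *ᵥ f') x :=
  hasDerivAt_pi.2 fun i =>
    HasDerivAt.fun_sum (u := Finset.univ) fun j _ => (hasDerivAt_pi.1 hf j).const_mul (K i j)

theorem mul_eq_mul_of_mul_mul_eq {K A B : Matrix n n 𝕜} [DecidableEq n] (hK : K * K = 1)
    (h : K * A * K = B) : K * A = B * K := by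
  rw [← h, Matrix.mul_assoc _ K K, hK, Matrix.mul_one]

theorem neg_mul_twoPoleCoeff_one_sub {A B G K : Matrix n n 𝕜}
    (hA : K * A = B * K) (hB : K * B = A * K) (hG : K * G = -(G * K)) (z : 𝕜) :
    -(K * twoPoleCoeff A B G (1 - z)) = twoPoleCoeff A B G z * K := by
  have hz : (1 - z : 𝕜)⁻¹ = -(z - 1)⁻¹ := by rw [← inv_neg, neg_sub]
  have hz1 : (1 - z - 1 : 𝕜)⁻¹ = -z⁻¹ := by rw [sub_sub_cancel_left, inv_neg]
  simp only [twoPoleCoeff, hz, hz1, Matrix.mul_add, Matrix.add_mul, neg_smul, Matrix.mul_neg,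
    mul_smul_comm, smul_mul_assoc, hA, hB, hG]
  abel

theorem HasDerivAt.reflect_twoPoleCoeff {A B G K : Matrix n n 𝕜}
    (hA : K * A = B * K) (hB : K * B = A * K) (hG : K * G = -(G * K))
    {y : 𝕜 → n → 𝕜} {z : 𝕜}
    (hy : HasDerivAt y (twoPoleCoeff A B G (1 - z) *ᵥ y (1 - z)) (1 - z)) :
    HasDerivAt (fun w => K *ᵥ y (1 - w)) (twoPoleCoeff A B G z *ᵥ (K *ᵥ y (1 - z))) z := by
  convert (hy.comp_const_sub 1 z).const_mulVec K using 1
  rw [mulVec_mulVec, ← neg_mul_twoPoleCoeff_one_sub hA hB hG, neg_mulVec, mulVec_neg,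
    mulVec_mulVec]

/-- The symmetry of the spheroidal system under `z ↦ 1−z` (Section 4 of the paper):
`KAK = B`, `KBK = A`, `KG₀K = −G₀`, and consequently `ỹ(z) := K y(1−z)` solves the
same first-order system as `y`. -/
theorem spheroidal_system_symmetry
    (μ t γsq : ℂ)
    (A B G₀ K : Matrix (Fin 2) (Fin 2) ℂ)
    (hA : A = !![-μ / 2 - 1, -t; 0, μ / 2])
    (hB : B = !![-μ / 2 - 1, t; 0, μ / 2])
    (hG : G₀ = !![0, -4 * γsq; 1, 0])
    (hK : K = !![-1, 0; 0, 1]) :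
    K * A * K = B ∧ K * B * K = A ∧ K * G₀ * K = -G₀ ∧
    ∀ (U : Set ℂ), IsOpen U → U ⊆ {(0 : ℂ), 1}ᶜ →
      ∀ y : ℂ → Fin 2 → ℂ,
        (∀ z ∈ U, HasDerivAt y ((z⁻¹ • A + (z - 1)⁻¹ • B + G₀).mulVec (y z)) z) →
        ∀ z : ℂ, (1 - z) ∈ U → z ≠ 0 → z ≠ 1 →
          HasDerivAt (fun w => K.mulVec (y (1 - w)))
            ((z⁻¹ • A + (z - 1)⁻¹ • B + G₀).mulVec (K.mulVec (y (1 - z)))) z := by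
  have hKK : K * K = 1 := by rw [hK]; simp [Matrix.one_fin_two]
  have hKAK : K * A * K = B := by subst hA hB hK; simp
  have hKBK : K * B * K = A := by subst hA hB hK; simp
  have hKGK : K * G₀ * K = -G₀ := by subst hG hK; simp
  have hKG : K * G₀ = -(G₀ * K) := by
    rw [mul_eq_mul_of_mul_mul_eq hKK hKGK, Matrix.neg_mul]
  refine ⟨hKAK, hKBK, hKGK, fun U _ _ y hy z hz _ _ => ?_⟩
  exact (hy (1 - z) hz).reflect_twoPoleCoeff (mul_eq_mul_of_mul_mul_eq hKK hKAK)
    (mul_eq_mul_of_mul_mul_eq hKK hKBK) hKG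
end
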